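/- arXiv:2112.13609 — 2 statements merged into one kernel-verified Lean document; each statement's English description precedes it below -/
import Mathlib

section
/- For the L1 scheme weights ω_j^{(1)} defined by ω_0^{(1)} = 1/Γ(2-α) and ω_j^{(1)} = ((j+1)^{1-α} - 2 j^{1-α} + (j-1)^{1-α})/Γ(2-α) for j ≥ 1, the generating function identity Σ_{j=0}^∞ ω_j^{(1)} ξ^j = (1-ξ)^2 ξ^{-1} Li_{α-1}(ξ) / Γ(2-α) holds for all complex ξ with 0 < |ξ| < 1. -/
open scoped BigOperators

/-- `x ^ e` with the convention `0 ^ e = 0`. -/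
noncomputable def rp (x e : ℝ) : ℝ := if x = 0 then 0 else x ^ e

/-- The L1 scheme weights. -/
noncomputable def L1weight (α : ℝ) : ℕ → ℝ
  | 0 => 1 / Real.Gamma (2 - α)
  | (j + 1) =>
      (rp ((j : ℝ) + 2) (1 - α) - 2 * rp ((j : ℝ) + 1) (1 - α) + rp (j : ℝ) (1 - α)) /
        Real.Gamma (2 - α)

/-- Generating function identity for the L1 weights:
`Σ_{j=0}^∞ ω_j^{(1)} ξ^j = (1-ξ)^2 ξ⁻¹ Li_{α-1}(ξ) / Γ(2-α)` for `0 < |ξ| < 1`. -/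
theorem L1_generating_function (α : ℝ) (hα : 0 < α ∧ α < 1) (ξ : ℂ)
    (hξ0 : ξ ≠ 0) (hξ1 : ‖ξ‖ < 1) :
    ∑' j : ℕ, (L1weight α j : ℂ) * ξ ^ j
      = (1 - ξ) ^ 2 * ξ⁻¹ *
          (∑' j : ℕ, ξ ^ (j + 1) / ((((j : ℝ) + 1) ^ (α - 1) : ℝ) : ℂ)) /
          ((Real.Gamma (2 - α) : ℝ) : ℂ) := by
  obtain ⟨hα0, hα1⟩ := hα
  have hΓpos : 0 < Real.Gamma (2 - α) := Real.Gamma_pos_of_pos (by linarith)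
  have hΓ : ((Real.Gamma (2 - α) : ℝ) : ℂ) ≠ 0 := by
    exact_mod_cast ne_of_gt hΓpos
  set u : ℕ → ℂ := fun j => ((((j : ℝ) + 1) ^ (1 - α) : ℝ) : ℂ) * ξ ^ j with hu
  set v : ℕ → ℂ := fun j =>
    if j = 0 then 0 else (((j : ℝ) ^ (1 - α) : ℝ) : ℂ) * ξ ^ j with hv
  set w : ℕ → ℂ := fun j =>
    if j < 2 then 0 else ((((j : ℝ) - 1) ^ (1 - α) : ℝ) : ℂ) * ξ ^ j with hw
  -- summable majorant
  have hM : Summable (fun j : ℕ => ((j : ℝ) + 1) * ‖ξ‖ ^ j) := by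
    have h1 : Summable (fun j : ℕ => (j : ℝ) ^ 1 * ‖ξ‖ ^ j) :=
      summable_pow_mul_geometric_of_norm_lt_one 1 (by rwa [norm_norm])
    have h2 : Summable (fun j : ℕ => ‖ξ‖ ^ j) :=
      summable_geometric_of_lt_one (norm_nonneg _) hξ1
    have := h1.add h2
    convert this using 2 with j
    ring
  have hrle : ∀ x : ℝ, 0 ≤ x → x ^ (1 - α) ≤ x + 1 := by
    intro x hx
    rcases eq_or_lt_of_le hx with h | h
    · rw [← h, Real.zero_rpow (by linarith)]; linarith
    · rcases le_or_gt x 1 with h1 | h1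
      · calc x ^ (1 - α) ≤ 1 ^ (1 - α) :=
              Real.rpow_le_rpow (le_of_lt h) h1 (by linarith)
          _ = 1 := Real.one_rpow _
          _ ≤ x + 1 := by linarith
      · calc x ^ (1 - α) ≤ x ^ (1 : ℝ) :=
              Real.rpow_le_rpow_of_exponent_le (le_of_lt h1) (by linarith)
          _ = x := Real.rpow_one x
          _ ≤ x + 1 := by linarith
  have hSu : Summable u := by
    refine Summable.of_norm_bounded (hM.mul_left 2) (fun j => ?_)
    have hb : (0:ℝ) ≤ (j : ℝ) + 1 := by positivity
    rw [hu]
    simp only [norm_mul, Complex.norm_real, norm_pow]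
    rw [Real.norm_of_nonneg (Real.rpow_nonneg hb _)]
    have h1 : ((j : ℝ) + 1) ^ (1 - α) ≤ ((j : ℝ) + 1) + 1 := hrle _ hb
    have h2 : (0:ℝ) ≤ ‖ξ‖ ^ j := by positivity
    nlinarith [mul_le_mul_of_nonneg_right h1 h2, h2, mul_nonneg (by positivity : (0:ℝ) ≤ (j:ℝ)) h2]
  have hSv : Summable v := by
    refine Summable.of_norm_bounded (hM.mul_left 2) (fun j => ?_)
    rw [hv]
    by_cases hj : j = 0
    · simp [hj]
    · simp only [hj, if_false, norm_mul, Complex.norm_real, norm_pow]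
      rw [Real.norm_of_nonneg (Real.rpow_nonneg (by positivity) _)]
      have h1 : ((j : ℝ)) ^ (1 - α) ≤ (j : ℝ) + 1 := hrle _ (by positivity)
      have h2 : (0:ℝ) ≤ ‖ξ‖ ^ j := by positivity
      nlinarith [mul_le_mul_of_nonneg_right h1 h2]
  have hSw : Summable w := by
    refine Summable.of_norm_bounded (hM.mul_left 2) (fun j => ?_)
    rw [hw]
    by_cases hj : j < 2
    · simp only [hj, if_true, norm_zero]
      positivity
    · have hj2 : (2:ℝ) ≤ (j:ℝ) := by exact_mod_cast Nat.le_of_not_lt hj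
      simp only [hj, if_false, norm_mul, Complex.norm_real, norm_pow]
      rw [Real.norm_of_nonneg (Real.rpow_nonneg (by linarith) _)]
      have h1 : ((j : ℝ) - 1) ^ (1 - α) ≤ ((j : ℝ) - 1) + 1 := hrle _ (by linarith)
      have h2 : (0:ℝ) ≤ ‖ξ‖ ^ j := by positivity
      nlinarith [mul_le_mul_of_nonneg_right h1 h2]
  set S : ℂ := ∑' j : ℕ, u j with hS
  -- shift identities
  have hVeq : ∑' j, v j = ξ * S := by
    rw [Summable.tsum_eq_zero_add hSv]
    have h0 : v 0 = 0 := by simp [hv]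
    have hsucc : ∀ j : ℕ, v (j + 1) = ξ * u j := by
      intro j
      simp only [hv, hu, Nat.succ_ne_zero, if_false]
      push_cast
      ring
    rw [h0, zero_add]
    simp_rw [hsucc]
    rw [tsum_mul_left]
  have hWeq : ∑' j, w j = ξ ^ 2 * S := by
    rw [Summable.tsum_eq_zero_add hSw, Summable.tsum_eq_zero_add ((summable_nat_add_iff 1).2 hSw)]
    have h0 : w 0 = 0 := by simp [hw]
    have h1 : w 1 = 0 := by simp [hw]
    have hsucc : ∀ j : ℕ, w (j + 1 + 1) = ξ ^ 2 * u j := by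
      intro j
      have : ¬ (j + 1 + 1 < 2) := by omega
      simp only [hw, hu, this, if_false]
      push_cast
      ring_nf
    rw [h0, h1, zero_add, zero_add]
    simp_rw [hsucc]
    rw [tsum_mul_left]
  -- pointwise identity
  have hpt : ∀ j : ℕ, ((Real.Gamma (2 - α) : ℝ) : ℂ) * ((L1weight α j : ℝ) : ℂ) * ξ ^ j
      = u j - 2 * v j + w j := by
    intro j
    match j with
    | 0 =>
      simp only [L1weight, hu, hv, hw]
      norm_num [Real.one_rpow]
      field_simp
    | 1 =>
      have e1 : rp ((0 : ℕ) + 2 : ℝ) (1 - α) = (2 : ℝ) ^ (1 - α) := by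
        rw [rp, if_neg (by norm_num)]; norm_num
      have e2 : rp ((0 : ℕ) + 1 : ℝ) (1 - α) = (1 : ℝ) ^ (1 - α) := by
        rw [rp, if_neg (by norm_num)]; norm_num
      have e3 : rp ((0 : ℕ) : ℝ) (1 - α) = 0 := by
        rw [rp, if_pos (by norm_num)]
      simp only [L1weight, hu, hv, hw, e1, e2, e3]
      norm_num
      rw [div_eq_mul_inv]
      field_simp
    | (k + 2) =>
      have e1 : rp ((k + 1 : ℕ) + 2 : ℝ) (1 - α) = ((k : ℝ) + 3) ^ (1 - α) := by
        rw [rp, if_neg (by positivity)]; push_cast; ring_nf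
      have e2 : rp ((k + 1 : ℕ) + 1 : ℝ) (1 - α) = ((k : ℝ) + 2) ^ (1 - α) := by
        rw [rp, if_neg (by positivity)]; push_cast; ring_nf
      have e3 : rp ((k + 1 : ℕ) : ℝ) (1 - α) = ((k : ℝ) + 1) ^ (1 - α) := by
        rw [rp, if_neg (by exact_mod_cast Nat.succ_ne_zero k)]; push_cast; ring_nf
      have h2 : ¬ (k + 2 < 2) := by omega
      simp only [L1weight, hu, hv, hw, e1, e2, e3, h2, if_false, Nat.succ_ne_zero]
      rw [div_eq_mul_inv]
      push_cast
      have c1 : (((k:ℕ) + 2 : ℕ) : ℝ) = (k : ℝ) + 2 := by push_cast; ring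
      field_simp
      ring_nf
  -- summability of lhs
  have hScomb : Summable (fun j => u j - 2 * v j + w j) :=
    (hSu.sub (hSv.mul_left 2)).add hSw
  have hSlhs : Summable (fun j : ℕ => ((L1weight α j : ℝ) : ℂ) * ξ ^ j) := by
    have h := hScomb
    have h2 : Summable (fun j : ℕ =>
        ((Real.Gamma (2 - α) : ℝ) : ℂ) * (((L1weight α j : ℝ) : ℂ) * ξ ^ j)) := by
      refine h.congr (fun j => ?_)
      rw [← mul_assoc, hpt j]
    have := h2.mul_left (((Real.Gamma (2 - α) : ℝ) : ℂ))⁻¹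
    refine this.congr (fun j => ?_)
    rw [← mul_assoc, inv_mul_cancel₀ hΓ, one_mul]
  -- main sum identity
  have hmain : ((Real.Gamma (2 - α) : ℝ) : ℂ) * ∑' j : ℕ, ((L1weight α j : ℝ) : ℂ) * ξ ^ j
      = (1 - ξ) ^ 2 * S := by
    rw [← tsum_mul_left]
    calc ∑' j : ℕ, ((Real.Gamma (2 - α) : ℝ) : ℂ) * (((L1weight α j : ℝ) : ℂ) * ξ ^ j)
        = ∑' j : ℕ, (u j - 2 * v j + w j) := by
          refine tsum_congr (fun j => ?_)
          rw [← mul_assoc, hpt j]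
      _ = (∑' j, u j) - 2 * (∑' j, v j) + ∑' j, w j := by
          rw [Summable.tsum_add (hSu.sub (hSv.mul_left 2)) hSw, Summable.tsum_sub hSu (hSv.mul_left 2),
            tsum_mul_left]
      _ = S - 2 * (ξ * S) + ξ ^ 2 * S := by rw [hVeq, hWeq]
      _ = (1 - ξ) ^ 2 * S := by ring
  -- rewrite rhs inner sum
  have hinner : (∑' j : ℕ, ξ ^ (j + 1) / ((((j : ℝ) + 1) ^ (α - 1) : ℝ) : ℂ)) = ξ * S := by
    have hterm : ∀ j : ℕ, ξ ^ (j + 1) / ((((j : ℝ) + 1) ^ (α - 1) : ℝ) : ℂ) = ξ * u j := by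
      intro j
      have hb : (0:ℝ) < (j : ℝ) + 1 := by positivity
      have hinv : (((j : ℝ) + 1) ^ (α - 1))⁻¹ = ((j : ℝ) + 1) ^ (1 - α) := by
        rw [← Real.rpow_neg (le_of_lt hb)]
        ring_nf
      rw [div_eq_mul_inv, ← Complex.ofReal_inv, hinv, hu]
      push_cast
      ring
    simp_rw [hterm]
    rw [tsum_mul_left]
  rw [hinner]
  have hgoal : (1 - ξ) ^ 2 * ξ⁻¹ * (ξ * S) = (1 - ξ) ^ 2 * S := by
    field_simp
  rw [hgoal, eq_div_iff hΓ, mul_comm]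
  exact hmain
end

section
/- Let 0 < α < 1 and θ ∈ (π/2, π), and suppose z^α_τ − z^α = O(z^{k+1} τ^{k+1−α}) and c₁|z| ≤ |z_τ| ≤ c₂|z| on the truncated contour. If the operator A satisfies ‖(z^α − A)^{-1}‖ ≤ c|z|^{−α} on the sector and z_τ^α lies in a suitable sector, then ‖(z_τ^α − A)^{-1} − (z^α − A)^{-1}‖ ≤ C τ^{k+1−α} |z|^{k+1−2α}. -/
/-- Resolvent perturbation estimate: if `‖z_τ^α - z^α‖ ≤ c τ^{k+1-α} ‖z‖^{k+1}`,
`c₁‖z‖ ≤ ‖z_τ‖ ≤ c₂‖z‖`, and both resolvents exist with the sectorial bounds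
`‖(z_τ^α - A)⁻¹‖ ≤ c ‖z_τ‖^{-α}`, `‖(z^α - A)⁻¹‖ ≤ c ‖z‖^{-α}`, then
`‖(z_τ^α - A)⁻¹ - (z^α - A)⁻¹‖ ≤ C τ^{k+1-α} ‖z‖^{k+1-2α}`. -/
theorem resolvent_difference_estimate {X : Type*} [NormedAddCommGroup X]
    [NormedSpace ℂ X] (A : X →L[ℂ] X) (α : ℝ) (hα : 0 < α ∧ α < 1) (k : ℕ)
    (τ : ℝ) (hτ : 0 < τ) (c c₁ c₂ : ℝ) (hc : 0 < c) (hc₁ : 0 < c₁) (hc₂ : 0 < c₂)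
    (S : Set ℂ) (zτ : ℂ → ℂ) (Rτ R : ℂ → X →L[ℂ] X)
    (hz : ∀ z ∈ S, z ≠ 0)
    (hcomp : ∀ z ∈ S, c₁ * ‖z‖ ≤ ‖zτ z‖ ∧ ‖zτ z‖ ≤ c₂ * ‖z‖)
    (hpow : ∀ z ∈ S,
      ‖(zτ z) ^ (α : ℂ) - z ^ (α : ℂ)‖ ≤ c * τ ^ ((k : ℝ) + 1 - α) * ‖z‖ ^ ((k : ℝ) + 1))
    (hRτ : ∀ z ∈ S,
      (((zτ z) ^ (α : ℂ)) • ContinuousLinearMap.id ℂ X - A).comp (Rτ z)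
          = ContinuousLinearMap.id ℂ X ∧
      (Rτ z).comp (((zτ z) ^ (α : ℂ)) • ContinuousLinearMap.id ℂ X - A)
          = ContinuousLinearMap.id ℂ X ∧
      ‖Rτ z‖ ≤ c * ‖zτ z‖ ^ (-α))
    (hR : ∀ z ∈ S,
      ((z ^ (α : ℂ)) • ContinuousLinearMap.id ℂ X - A).comp (R z)
          = ContinuousLinearMap.id ℂ X ∧
      (R z).comp ((z ^ (α : ℂ)) • ContinuousLinearMap.id ℂ X - A)
          = ContinuousLinearMap.id ℂ X ∧
      ‖R z‖ ≤ c * ‖z‖ ^ (-α)) :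
    ∃ C > 0, ∀ z ∈ S,
      ‖Rτ z - R z‖ ≤ C * τ ^ ((k : ℝ) + 1 - α) * ‖z‖ ^ ((k : ℝ) + 1 - 2 * α) := by
  obtain ⟨hα0, hα1⟩ := hα
  refine ⟨c ^ 3 * c₁ ^ (-α), by positivity, fun z hzS => ?_⟩
  obtain ⟨hlow, _⟩ := hcomp z hzS
  obtain ⟨haτ, hτa, hnτ⟩ := hRτ z hzS
  obtain ⟨hbR, hRb, hnR⟩ := hR z hzS
  have hzpos : (0:ℝ) < ‖z‖ := norm_pos_iff.mpr (hz z hzS)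
  have hzτpos : (0:ℝ) < ‖zτ z‖ := lt_of_lt_of_le (by positivity) hlow
  set a : X →L[ℂ] X := ((zτ z) ^ (α : ℂ)) • ContinuousLinearMap.id ℂ X - A with ha
  set b : X →L[ℂ] X := (z ^ (α : ℂ)) • ContinuousLinearMap.id ℂ X - A with hb
  have hmul1 : Rτ z * a = 1 := hτa
  have hmul2 : b * R z = 1 := hbR
  -- resolvent identity
  have hkey : Rτ z - R z = Rτ z * ((z ^ (α : ℂ) - (zτ z) ^ (α : ℂ)) • (1 : X →L[ℂ] X)) * R z := by
    have hba : b - a = (z ^ (α : ℂ) - (zτ z) ^ (α : ℂ)) • (1 : X →L[ℂ] X) := by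
      rw [ha, hb, sub_smul]
      simp [ContinuousLinearMap.one_def]
    calc Rτ z - R z = Rτ z * (b * R z) - (Rτ z * a) * R z := by rw [hmul1, hmul2]; simp
      _ = Rτ z * (b - a) * R z := by noncomm_ring
      _ = Rτ z * ((z ^ (α : ℂ) - (zτ z) ^ (α : ℂ)) • (1 : X →L[ℂ] X)) * R z := by rw [hba]
  have hnormsmul : ‖((z ^ (α : ℂ) - (zτ z) ^ (α : ℂ)) • (1 : X →L[ℂ] X))‖
      ≤ c * τ ^ ((k : ℝ) + 1 - α) * ‖z‖ ^ ((k : ℝ) + 1) := by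
    refine (norm_smul_le (z ^ (α : ℂ) - (zτ z) ^ (α : ℂ)) (1 : X →L[ℂ] X)).trans ?_
    calc ‖z ^ (α : ℂ) - (zτ z) ^ (α : ℂ)‖ * ‖(1 : X →L[ℂ] X)‖
        ≤ ‖z ^ (α : ℂ) - (zτ z) ^ (α : ℂ)‖ * 1 := by
          gcongr; exact ContinuousLinearMap.norm_id_le
      _ = ‖(zτ z) ^ (α : ℂ) - z ^ (α : ℂ)‖ := by rw [mul_one, norm_sub_rev]
      _ ≤ _ := hpow z hzS
  have hnτ' : ‖Rτ z‖ ≤ c * c₁ ^ (-α) * ‖z‖ ^ (-α) := by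
    have h1 : ‖zτ z‖ ^ (-α) ≤ (c₁ * ‖z‖) ^ (-α) :=
      Real.rpow_le_rpow_of_nonpos (by positivity) hlow (by linarith)
    calc ‖Rτ z‖ ≤ c * ‖zτ z‖ ^ (-α) := hnτ
      _ ≤ c * (c₁ * ‖z‖) ^ (-α) := mul_le_mul_of_nonneg_left h1 hc.le
      _ = c * c₁ ^ (-α) * ‖z‖ ^ (-α) := by
          rw [Real.mul_rpow hc₁.le hzpos.le]; ring
  calc ‖Rτ z - R z‖
      ≤ ‖Rτ z‖ * ‖((z ^ (α : ℂ) - (zτ z) ^ (α : ℂ)) • (1 : X →L[ℂ] X))‖ * ‖R z‖ := by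
        rw [hkey]; exact (norm_mul_le _ _).trans (by gcongr; exact norm_mul_le _ _)
    _ ≤ (c * c₁ ^ (-α) * ‖z‖ ^ (-α)) * (c * τ ^ ((k : ℝ) + 1 - α) * ‖z‖ ^ ((k : ℝ) + 1))
        * (c * ‖z‖ ^ (-α)) := by
        exact mul_le_mul (mul_le_mul hnτ' hnormsmul (norm_nonneg _) (by positivity))
          hnR (norm_nonneg _) (by positivity)
    _ = c ^ 3 * c₁ ^ (-α) * τ ^ ((k : ℝ) + 1 - α)
        * (‖z‖ ^ (-α) * ‖z‖ ^ ((k : ℝ) + 1) * ‖z‖ ^ (-α)) := by ring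
    _ = c ^ 3 * c₁ ^ (-α) * τ ^ ((k : ℝ) + 1 - α) * ‖z‖ ^ ((k : ℝ) + 1 - 2 * α) := by
        rw [← Real.rpow_add hzpos, ← Real.rpow_add hzpos]
        ring_nf
end
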